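/- Let X be a graph as in the context and fix a vertex x₀. Define the formal power series N(u:x₀) = Σ_{m=1}^{∞} N_m(x₀) u^m, B(u:x₀) = Σ_{m=1}^{∞} b_m(x₀) u^m where b_m(x₀) = c_m(x₀) for m = 1,2 and b_m(x₀) = c_m(x₀) − (deg(x₀)−2)·Σ_{j=1}^{⌈m/2⌉−1} c_{m−2j}(x₀) for m ≥ 3, and R(u:x₀) = Σ_{m=1}^{∞} R_m(x₀) u^m where R_m(x₀) = Σ_{i=1}^{⌈m/2⌉−1} i·(Δ_X c_{m−2i})(x₀). Then N(u:x₀) = B(u:x₀) + R(u:x₀). -/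

import Mathlib

/-- A graph in the sense of Serre: an edge set with origin/terminus maps and a
fixed-point-free involution `bar` satisfying `o e = t (bar e)`.
Loops and multiple edges are allowed. -/
structure SerreGraph where
  V : Type
  E : Type
  o : E → V
  t : E → V
  bar : E → E
  bar_ne : ∀ e, bar e ≠ e
  bar_bar : ∀ e, bar (bar e) = e
  o_bar : ∀ e, o e = t (bar e)

namespace SerreGraph

variable (X : SerreGraph)

/-- The set of edges emanating from `x`. -/
def edgesAt (x : X.V) : Set X.E := {e | X.o e = x}

/-- The degree of a vertex. -/
noncomputable def deg (x : X.V) : ℕ := Nat.card (X.edgesAt x)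

/-- A sequence of `m` edges is a path when consecutive edges are composable. -/
def IsPath {m : ℕ} (p : Fin m → X.E) : Prop :=
  ∀ (i : ℕ) (h : i + 1 < m), X.t (p ⟨i, by omega⟩) = X.o (p ⟨i + 1, h⟩)

/-- No backtracking: no edge is followed by its reversal. -/
def NoBacktrack {m : ℕ} (p : Fin m → X.E) : Prop :=
  ∀ (i : ℕ) (h : i + 1 < m), p ⟨i + 1, h⟩ ≠ X.bar (p ⟨i, by omega⟩)

/-- A geodesic loop at `x`: a closed path starting and ending at `x` with no
backtracking. -/
def IsGeodesicLoopAt {m : ℕ} (x : X.V) (p : Fin m → X.E) : Prop :=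
  X.IsPath p ∧ X.NoBacktrack p ∧
    ∀ (h : 0 < m), X.o (p ⟨0, h⟩) = x ∧ X.t (p ⟨m - 1, by omega⟩) = x

/-- A path has a tail when its last edge is the reversal of its first edge. -/
def HasTail {m : ℕ} (p : Fin m → X.E) : Prop :=
  ∃ (h : 0 < m), p ⟨m - 1, by omega⟩ = X.bar (p ⟨0, h⟩)

/-- `c m x` is the number of geodesic loops of length `m` starting at `x`. -/
noncomputable def c (m : ℕ) (x : X.V) : ℕ :=
  Nat.card {p : Fin m → X.E // X.IsGeodesicLoopAt x p}

/-- `N m x` is the number of closed geodesics of length `m` starting at `x`,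
i.e. geodesic loops with no tail. -/
noncomputable def N (m : ℕ) (x : X.V) : ℕ :=
  Nat.card {p : Fin m → X.E // X.IsGeodesicLoopAt x p ∧ ¬ X.HasTail p}

/-- The formal combinatorial Laplacian applied to a function on vertices:
`(Δ f)(x) = deg(x)·f(x) − Σ_{e ∈ E_x} f(t(e))`. -/
noncomputable def lap (f : X.V → ℤ) (x : X.V) : ℤ :=
  (X.deg x : ℤ) * f x - ∑ᶠ e ∈ X.edgesAt x, f (X.t e)

/-- Connectedness: any two vertices are joined by a path. -/
def Connected : Prop :=
  ∀ x y : X.V, x = y ∨ ∃ (m : ℕ) (p : Fin m → X.E) (h : 0 < m),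
    X.IsPath p ∧ X.o (p ⟨0, h⟩) = x ∧ X.t (p ⟨m - 1, by omega⟩) = y

end SerreGraph

/-!
Geodesic loops are modelled as lists of edges. Let `t_m` count the tailed geodesic loops of
length `m` at `x`, so that `c_m = t_m + N_m`; the theorem amounts to
`t_m = (deg x - 2) ∑_j c_{m-2j}(x) - ∑_i i (Δ c_{m-2i})(x)`.

Sort the pairs `(e, q)`, with `e ∈ E_x` and `q` a geodesic loop of length `m` at `t e`, by whether
`q` starts with `ē` and whether it ends with `e`. If neither, `e q ē` is a tailed loop of length
`m + 2` at `x`; if exactly one, rotating `q` gives a closed geodesic at `x`; if both, `q = ē s e`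
with `s` a geodesic loop of length `m - 2` at `x` that neither starts with `e` nor ends with `ē`,
and sorting the pairs `(e, s)` in the same way counts these as `(deg x - 2) c_{m-2} + t_{m-2}`.
This gives a recurrence `t_{m+4} = 2 t_{m+2} - t_m + (deg x - 2)(c_{m+2} - c_m) - Δc_{m+2}`,
whose solution is the formula above.
-/

open Set

theorem Set.ncard_sep_add_ncard_sep_not {α : Type*} {s : Set α} (hs : s.Finite)
    (P : α → Prop) :
    {a ∈ s | P a}.ncard + {a ∈ s | ¬ P a}.ncard = s.ncard :=
  ncard_inter_add_ncard_sdiff_eq_ncard s {a | P a} hs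

theorem Set.ncard_split_by_two_predicates {α : Type*} {s : Set α} (hs : s.Finite)
    (P Q : α → Prop) :
    s.ncard = {a ∈ s | ¬ P a ∧ ¬ Q a}.ncard + {a ∈ s | P a ∧ ¬ Q a}.ncard +
      {a ∈ s | ¬ P a ∧ Q a}.ncard + {a ∈ s | P a ∧ Q a}.ncard := by
  have hsep : ∀ R S : α → Prop, {a ∈ {a ∈ s | S a} | R a} = {a ∈ s | R a ∧ S a} := by
    intro R S; ext a; simp only [mem_ofPred_eq]; tauto
  rw [← ncard_sep_add_ncard_sep_not hs Q, ← ncard_sep_add_ncard_sep_not (hs.sep Q) P,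
    ← ncard_sep_add_ncard_sep_not (hs.sep fun a => ¬ Q a) P, hsep, hsep, hsep, hsep]
  ring

theorem Set.ncard_setOf_mem_and_mem_eq_finsum {α β : Type*} {A : Set α} {B : α → Set β}
    (hA : A.Finite) (hB : ∀ a ∈ A, (B a).Finite) :
    {q : α × β | q.1 ∈ A ∧ q.2 ∈ B q.1}.ncard = ∑ᶠ a ∈ A, (B a).ncard := by
  have hunion : {q : α × β | q.1 ∈ A ∧ q.2 ∈ B q.1} = ⋃ a ∈ A, Prod.mk a '' B a := by
    ext ⟨a, b⟩; simp [and_comm]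
  rw [hunion, hA.ncard_biUnion (fun a ha => (hB a ha).image _)]
  · exact finsum_mem_congr rfl fun a _ => ncard_image_of_injective _ (Prod.mk_right_injective a)
  · intro a _ a' _ hne
    simp only [Function.onFun, disjoint_left, mem_image]
    rintro _ ⟨b, -, rfl⟩ ⟨b', -, h⟩
    exact hne (congrArg Prod.fst h).symm

theorem List.natCard_subtype_ofFn {α : Type*} (m : ℕ) (P : List α → Prop) :
    Nat.card {p : Fin m → α // P (List.ofFn p)} =
      {l : List α | l.length = m ∧ P l}.ncard := by
  refine (Nat.card_coe_set_eq {p : Fin m → α | P (List.ofFn p)}).trans <|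
    (ncard_image_of_injective _ List.ofFn_injective).symm.trans
    (congrArg ncard (ext fun l => ⟨?_, ?_⟩))
  · rintro ⟨p, hp, rfl⟩
    exact ⟨List.length_ofFn, hp⟩
  · rintro ⟨rfl, hl⟩
    exact ⟨_, by simpa using hl, List.ofFn_getElem⟩

theorem Finset.sum_Icc_one_add_one {M : Type*} [AddCommMonoid M] (f : ℕ → M) (K : ℕ) :
    ∑ j ∈ Finset.Icc 1 (K + 1), f j = f 1 + ∑ j ∈ Finset.Icc 1 K, f (j + 1) := by
  induction K with
  | zero => simp
  | succ K ih =>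
    rw [Finset.sum_Icc_succ_top (by omega), ih, Finset.sum_Icc_succ_top (by omega), add_assoc]

namespace SerreGraph

variable (X : SerreGraph)

lemma bar_injective : Function.Injective X.bar :=
  Function.LeftInverse.injective X.bar_bar

def Follows (a b : X.E) : Prop := X.t a = X.o b ∧ b ≠ X.bar a

/-- Paths are lists of edges; the empty path from `y` to `z` requires `y = z`. -/
def IsGeodesicPath (y z : X.V) (l : List X.E) : Prop :=
  l.IsChain X.Follows ∧ l.head?.elim z X.o = y ∧ l.getLast?.elim y X.t = z

def IsTailed (l : List X.E) : Prop := ∃ a ∈ l.head?, X.bar a ∈ l.getLast?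

def loops (m : ℕ) (x : X.V) : Set (List X.E) := {l | l.length = m ∧ X.IsGeodesicPath x x l}

def tailedLoops (m : ℕ) (x : X.V) : Set (List X.E) := {l ∈ X.loops m x | X.IsTailed l}

def closedGeodesics (m : ℕ) (x : X.V) : Set (List X.E) := {l ∈ X.loops m x | ¬ X.IsTailed l}

def edgeLoopPairs (m : ℕ) (x : X.V) : Set (X.E × List X.E) :=
  {q | q.1 ∈ X.edgesAt x ∧ q.2 ∈ X.loops m (X.t q.1)}

/-- Pairs `(e, l)` for which the loop `e l ē` backtracks at both of its junctions. -/
def doublyBacktrackingPairs (m : ℕ) (x : X.V) : Set (X.E × List X.E) :=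
  {q ∈ X.edgeLoopPairs m x | q.2.head? = some (X.bar q.1) ∧ q.2.getLast? = some q.1}

variable {X}

@[simp] lemma o_bar' (e : X.E) : X.o (X.bar e) = X.t e := by
  rw [X.o_bar, X.bar_bar]

@[simp] lemma t_bar (e : X.E) : X.t (X.bar e) = X.o e := (X.o_bar e).symm

@[simp] lemma ne_bar (e : X.E) : e ≠ X.bar e := (X.bar_ne e).symm

lemma eq_bar_comm {a b : X.E} : a = X.bar b ↔ b = X.bar a := by
  constructor <;> rintro rfl <;> simp [X.bar_bar]

lemma isGeodesicLoopAt_iff {m : ℕ} {x : X.V} {p : Fin m → X.E} :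
    X.IsGeodesicLoopAt x p ↔ X.IsGeodesicPath x x (List.ofFn p) := by
  rw [IsGeodesicLoopAt, IsGeodesicPath, List.isChain_ofFn, ← and_assoc]
  simp only [Follows, IsPath, NoBacktrack, ← forall_and]
  cases m <;> simp [List.head?_eq_getElem?, List.getLast?_eq_getElem?, -List.ofFn_succ]

lemma hasTail_iff {m : ℕ} {p : Fin m → X.E} : X.HasTail p ↔ X.IsTailed (List.ofFn p) := by
  cases m <;> simp [HasTail, IsTailed, List.head?_eq_getElem?, List.getLast?_eq_getElem?,
    -List.ofFn_succ]

lemma c_eq_ncard_loops (m : ℕ) (x : X.V) : X.c m x = (X.loops m x).ncard := by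
  simp_rw [c, isGeodesicLoopAt_iff]
  exact List.natCard_subtype_ofFn m _

lemma N_eq_ncard_closedGeodesics (m : ℕ) (x : X.V) :
    X.N m x = (X.closedGeodesics m x).ncard := by
  simp_rw [N, isGeodesicLoopAt_iff, hasTail_iff]
  rw [List.natCard_subtype_ofFn m fun l => X.IsGeodesicPath x x l ∧ ¬ X.IsTailed l]
  simp only [closedGeodesics, loops, sep_ofPred, and_assoc]

lemma isGeodesicPath_cons {y z : X.V} {e : X.E} {l : List X.E} :
    X.IsGeodesicPath y z (e :: l) ↔
      X.o e = y ∧ X.IsGeodesicPath (X.t e) z l ∧ l.head? ≠ some (X.bar e) := by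
  cases l with
  | nil => simp [IsGeodesicPath, eq_comm]
  | cons a l =>
    simp only [IsGeodesicPath, List.isChain_cons_cons, Follows, List.head?_cons, Option.elim_some,
      List.getLast?_cons, Option.getD_some, ne_eq, Option.some.injEq]
    grind

lemma isGeodesicPath_append_singleton {y z : X.V} {f : X.E} {l : List X.E} :
    X.IsGeodesicPath y z (l ++ [f]) ↔
      X.t f = z ∧ X.IsGeodesicPath y (X.o f) l ∧ l.getLast? ≠ some (X.bar f) := by
  cases l using List.reverseRecOn with
  | nil => simp [IsGeodesicPath, eq_comm, and_comm]
  | append_singleton l a =>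
    simp only [IsGeodesicPath, List.isChain_append, List.IsChain.singleton, List.getLast?_concat,
      List.head?_cons, List.head?_append, Option.or_some, Option.elim_some, Option.mem_def,
      Option.some.injEq, forall_eq', Follows, ne_eq, true_and]
    grind [bar_bar]

lemma isGeodesicPath_cons_append_singleton {y z : X.V} {e f : X.E} {l : List X.E}
    (hl : l ≠ []) :
    X.IsGeodesicPath y z (e :: (l ++ [f])) ↔ X.o e = y ∧ X.t f = z ∧
      X.IsGeodesicPath (X.t e) (X.o f) l ∧ l.head? ≠ some (X.bar e) ∧
        l.getLast? ≠ some (X.bar f) := by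
  rw [isGeodesicPath_cons, isGeodesicPath_append_singleton, List.head?_append_of_ne_nil _ hl]
  tauto

lemma isTailed_cons {f : X.E} {r : List X.E} :
    X.IsTailed (f :: r) ↔ r.getLast? = some (X.bar f) := by
  cases r using List.reverseRecOn <;> simp [IsTailed, List.getLast?_cons]

lemma isTailed_append_singleton {f : X.E} {r : List X.E} :
    X.IsTailed (r ++ [f]) ↔ r.head? = some (X.bar f) := by
  cases r
  · simp [IsTailed]
  · simpa [IsTailed, List.getLast?_cons] using eq_bar_comm

lemma isTailed_iff_of_head?_eq {l : List X.E} {a : X.E} (h : l.head? = some a) :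
    X.IsTailed l ↔ l.getLast? = some (X.bar a) := by
  simp [IsTailed, h]

lemma isTailed_iff_of_getLast?_eq {l : List X.E} {b : X.E} (h : l.getLast? = some b) :
    X.IsTailed l ↔ l.head? = some (X.bar b) := by
  simp only [IsTailed, h, Option.mem_def, Option.some.injEq]
  exact ⟨fun ⟨a, ha, hab⟩ => by rwa [hab, X.bar_bar],
    fun ha => ⟨_, ha, (X.bar_bar b).symm⟩⟩

lemma not_isTailed_of_length_le_two {y z : X.V} {l : List X.E} (hl : l.length ≤ 2)
    (hp : X.IsGeodesicPath y z l) : ¬ X.IsTailed l := by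
  match l, hl with
  | [], _ => simp [IsTailed]
  | [a], _ => simp [IsTailed]
  | [a, b], _ => simp_all [IsTailed, IsGeodesicPath, Follows]

lemma cons_mem_closedGeodesics_iff {m : ℕ} {f : X.E} {r : List X.E} :
    f :: r ∈ X.closedGeodesics m (X.o f) ↔ r ++ [f] ∈ X.closedGeodesics m (X.t f) := by
  simp only [closedGeodesics, loops, mem_ofPred_eq, isGeodesicPath_cons,
    isGeodesicPath_append_singleton, isTailed_cons, isTailed_append_singleton, List.length_cons,
    List.length_append]
  tauto

section Finiteness

variable (hfin : ∀ x : X.V, (X.edgesAt x).Finite)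
include hfin

lemma finite_setOf_isGeodesicPath (m : ℕ) (y z : X.V) :
    {l : List X.E | l.length = m ∧ X.IsGeodesicPath y z l}.Finite := by
  induction m generalizing y with
  | zero => exact (finite_singleton []).subset fun l hl => List.eq_nil_of_length_eq_zero hl.1
  | succ m ih =>
    refine ((hfin y).biUnion fun e _ => (ih (X.t e)).image (List.cons e)).subset ?_
    rintro (_ | ⟨e, l⟩) ⟨hlen, hl⟩
    · simp at hlen
    rw [isGeodesicPath_cons] at hl
    exact mem_biUnion hl.1 ⟨l, ⟨by simpa using hlen, hl.2.1⟩, rfl⟩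

lemma loops_finite (m : ℕ) (x : X.V) : (X.loops m x).Finite :=
  finite_setOf_isGeodesicPath hfin m x x

lemma ncard_edgeLoopPairs (m : ℕ) (x : X.V) :
    (X.edgeLoopPairs m x).ncard = ∑ᶠ e ∈ X.edgesAt x, X.c m (X.t e) := by
  rw [edgeLoopPairs, ncard_setOf_mem_and_mem_eq_finsum (hfin x) fun e _ => loops_finite hfin m _]
  exact finsum_mem_congr rfl fun e _ => (c_eq_ncard_loops m _).symm

lemma edgeLoopPairs_finite (m : ℕ) (x : X.V) : (X.edgeLoopPairs m x).Finite :=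
  ((hfin x).biUnion fun e _ => (loops_finite hfin m (X.t e)).image (Prod.mk e)).subset
    fun q hq => mem_biUnion hq.1 ⟨q.2, hq.2, rfl⟩

lemma c_eq_ncard_tailedLoops_add_N (m : ℕ) (x : X.V) :
    X.c m x = (X.tailedLoops m x).ncard + X.N m x := by
  rw [c_eq_ncard_loops, N_eq_ncard_closedGeodesics, tailedLoops, closedGeodesics,
    ncard_sep_add_ncard_sep_not (loops_finite hfin m x)]

end Finiteness

lemma ncard_tailedLoops_add_two_eq_edgeLoopPairs {m : ℕ} (hm : m ≠ 0) (x : X.V) :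
    (X.tailedLoops (m + 2) x).ncard = {q ∈ X.edgeLoopPairs m x |
      ¬ q.2.head? = some (X.bar q.1) ∧ ¬ q.2.getLast? = some q.1}.ncard := by
  have hinj : Function.Injective fun q : X.E × List X.E => q.1 :: (q.2 ++ [X.bar q.1]) := by
    rintro ⟨e, l⟩ ⟨e', l'⟩ h
    simp only [List.cons.injEq] at h
    obtain ⟨rfl, h⟩ := h
    simpa using h
  rw [← ncard_image_of_injective _ hinj]
  congr 1
  ext w
  simp only [tailedLoops, loops, edgeLoopPairs, edgesAt, IsTailed, mem_ofPred_eq, mem_image,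
    Prod.exists]
  constructor
  · rintro ⟨⟨hlen, hw⟩, e, he, hlast⟩
    obtain ⟨w, rfl⟩ := List.head?_eq_some_iff.1 he
    rcases w.eq_nil_or_concat' with rfl | ⟨l, f, rfl⟩
    · simp at hlen
    obtain rfl : f = X.bar e := by simpa [List.getLast?_cons] using hlast
    replace hlen : l.length = m := by simpa using hlen
    have hne : l ≠ [] := by rintro rfl; exact hm hlen.symm
    rw [isGeodesicPath_cons_append_singleton hne] at hw
    exact ⟨e, l, ⟨⟨hw.1, hlen, by simpa using hw.2.2.1⟩, hw.2.2.2.1,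
      by simpa [X.bar_bar] using hw.2.2.2.2⟩, rfl⟩
  · rintro ⟨e, l, ⟨⟨he, hlen, hl⟩, hhead, hlast⟩, rfl⟩
    have hne : l ≠ [] := by rintro rfl; exact hm hlen.symm
    refine ⟨⟨by simp [hlen], ?_⟩, e, rfl, by simp [List.getLast?_cons]⟩
    rw [isGeodesicPath_cons_append_singleton hne]
    simp [he, hl, hhead, hlast, X.bar_bar]

lemma ncard_closedGeodesics_eq_edgeLoopPairs_head {m : ℕ} (hm : m ≠ 0) (x : X.V) :
    (X.closedGeodesics m x).ncard = {q ∈ X.edgeLoopPairs m x |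
      q.2.head? = some (X.bar q.1) ∧ ¬ q.2.getLast? = some q.1}.ncard := by
  have hinj : InjOn (fun q : X.E × List X.E => q.2.tail ++ [X.bar q.1])
      {q ∈ X.edgeLoopPairs m x |
        q.2.head? = some (X.bar q.1) ∧ ¬ q.2.getLast? = some q.1} := by
    rintro ⟨e, l⟩ ⟨-, hl, -⟩ ⟨e', l'⟩ ⟨-, hl', -⟩ h
    obtain ⟨r, rfl⟩ : ∃ r, l = X.bar e :: r := List.head?_eq_some_iff.1 hl
    obtain ⟨r', rfl⟩ : ∃ r', l' = X.bar e' :: r' := List.head?_eq_some_iff.1 hl'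
    obtain ⟨rfl, h⟩ := List.append_inj' h rfl
    obtain rfl := X.bar_injective (List.singleton_inj.1 h)
    rfl
  rw [← hinj.ncard_image]
  congr 1
  ext w
  simp only [edgeLoopPairs, edgesAt, mem_ofPred_eq, mem_image, Prod.exists]
  constructor
  · intro hw
    rcases w.eq_nil_or_concat' with rfl | ⟨r, f, rfl⟩
    · exact absurd hw.1.1.symm hm
    have hf : X.t f = x := (isGeodesicPath_append_singleton.1 hw.1.2).1
    have hrot := cons_mem_closedGeodesics_iff.2 (hf ▸ hw)
    refine ⟨X.bar f, f :: r,
      ⟨⟨by simpa using hf, by simpa using hrot.1⟩, by simp [X.bar_bar], ?_⟩,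
      by simp [X.bar_bar]⟩
    simpa [isTailed_iff_of_head?_eq] using hrot.2
  · rintro ⟨e, l, ⟨⟨he, hl⟩, hhead, hlast⟩, rfl⟩
    obtain ⟨r, rfl⟩ := List.head?_eq_some_iff.1 hhead
    have hrot : X.bar e :: r ∈ X.closedGeodesics m (X.o (X.bar e)) :=
      ⟨by simpa using hl, by simpa [isTailed_iff_of_head?_eq, X.bar_bar] using hlast⟩
    simpa [he] using cons_mem_closedGeodesics_iff.1 hrot

lemma ncard_closedGeodesics_eq_edgeLoopPairs_getLast {m : ℕ} (hm : m ≠ 0) (x : X.V) :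
    (X.closedGeodesics m x).ncard = {q ∈ X.edgeLoopPairs m x |
      ¬ q.2.head? = some (X.bar q.1) ∧ q.2.getLast? = some q.1}.ncard := by
  have hinj : InjOn (fun q : X.E × List X.E => q.1 :: q.2.dropLast)
      {q ∈ X.edgeLoopPairs m x |
        ¬ q.2.head? = some (X.bar q.1) ∧ q.2.getLast? = some q.1} := by
    rintro ⟨e, l⟩ ⟨-, -, hl⟩ ⟨e', l'⟩ ⟨-, -, hl'⟩ h
    obtain ⟨s, rfl⟩ : ∃ s, l = s ++ [e] := List.getLast?_eq_some_iff.1 hl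
    obtain ⟨s', rfl⟩ : ∃ s', l' = s' ++ [e'] := List.getLast?_eq_some_iff.1 hl'
    simp only [List.dropLast_concat, List.cons.injEq] at h
    obtain ⟨rfl, rfl⟩ := h
    rfl
  rw [← hinj.ncard_image]
  congr 1
  ext w
  simp only [edgeLoopPairs, edgesAt, mem_ofPred_eq, mem_image, Prod.exists]
  constructor
  · intro hw
    rcases w with _ | ⟨e, s⟩
    · exact absurd hw.1.1.symm hm
    have he : X.o e = x := (isGeodesicPath_cons.1 hw.1.2).1
    have hrot := cons_mem_closedGeodesics_iff.1 (he ▸ hw)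
    refine ⟨e, s ++ [e], ⟨⟨he, hrot.1⟩, ?_, by simp⟩, by simp⟩
    simpa [isTailed_iff_of_getLast?_eq] using hrot.2
  · rintro ⟨e, l, ⟨⟨he, hl⟩, hhead, hlast⟩, rfl⟩
    obtain ⟨s, rfl⟩ := List.getLast?_eq_some_iff.1 hlast
    have hrot : s ++ [e] ∈ X.closedGeodesics m (X.t e) :=
      ⟨hl, by simpa [isTailed_iff_of_getLast?_eq] using hhead⟩
    simpa [he] using cons_mem_closedGeodesics_iff.2 hrot

lemma ncard_doublyBacktrackingPairs_add_two_eq_prod {k : ℕ} (hk : k ≠ 0) (x : X.V) :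
    (X.doublyBacktrackingPairs (k + 2) x).ncard = {q ∈ X.edgesAt x ×ˢ X.loops k x |
      ¬ q.2.head? = some q.1 ∧ ¬ q.2.getLast? = some (X.bar q.1)}.ncard := by
  have hinj : Function.Injective fun q : X.E × List X.E => (q.1, X.bar q.1 :: (q.2 ++ [q.1])) := by
    rintro ⟨e, l⟩ ⟨e', l'⟩ h
    simp only [Prod.mk.injEq, List.cons.injEq] at h
    obtain ⟨rfl, -, h⟩ := h
    simpa using h
  conv_rhs => rw [← ncard_image_of_injective _ hinj]
  congr 1
  ext ⟨e, w⟩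
  simp only [doublyBacktrackingPairs, edgeLoopPairs, loops, edgesAt, mem_ofPred_eq, mem_image,
    mem_prod, Prod.exists, Prod.mk.injEq]
  constructor
  · rintro ⟨⟨he, hlen, hw⟩, hhead, hlast⟩
    obtain ⟨w, rfl⟩ := List.head?_eq_some_iff.1 hhead
    rcases w.eq_nil_or_concat' with rfl | ⟨s, f, rfl⟩
    · simp at hlen
    obtain rfl : f = e := by simpa [List.getLast?_cons] using hlast
    replace hlen : s.length = k := by simpa using hlen
    have hne : s ≠ [] := by rintro rfl; exact hk hlen.symm
    rw [isGeodesicPath_cons_append_singleton hne] at hw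
    refine ⟨f, s, ⟨⟨he, hlen, by simpa [he] using hw.2.2.1⟩,
      by simpa [X.bar_bar] using hw.2.2.2.1, hw.2.2.2.2⟩, rfl, rfl⟩
  · rintro ⟨e, s, ⟨⟨he, hlen, hs⟩, hhead, hlast⟩, rfl, rfl⟩
    have hne : s ≠ [] := by rintro rfl; exact hk hlen.symm
    refine ⟨⟨he, by simp [hlen], ?_⟩, rfl, by simp [List.getLast?_cons]⟩
    rw [isGeodesicPath_cons_append_singleton hne]
    simp [he, hs, hhead, hlast, X.bar_bar]

lemma ncard_closedGeodesics_eq_prod_head {k : ℕ} (hk : k ≠ 0) (x : X.V) :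
    (X.closedGeodesics k x).ncard = {q ∈ X.edgesAt x ×ˢ X.loops k x |
      q.2.head? = some q.1 ∧ ¬ q.2.getLast? = some (X.bar q.1)}.ncard := by
  have hinj : InjOn Prod.snd {q ∈ X.edgesAt x ×ˢ X.loops k x |
      q.2.head? = some q.1 ∧ ¬ q.2.getLast? = some (X.bar q.1)} := by
    rintro ⟨e, l⟩ ⟨-, he, -⟩ ⟨e', l'⟩ ⟨-, he', -⟩ (rfl : l = l')
    simp_all
  rw [← hinj.ncard_image]
  congr 1
  ext l
  simp only [closedGeodesics, edgesAt, mem_ofPred_eq, mem_image, mem_prod, Prod.exists,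
    exists_eq_right]
  constructor
  · rintro ⟨hl, htail⟩
    rcases l with _ | ⟨e, l⟩
    · exact absurd hl.1.symm hk
    exact ⟨e, ⟨(isGeodesicPath_cons.1 hl.2).1, hl⟩, rfl,
      by rwa [← isTailed_iff_of_head?_eq rfl]⟩
  · rintro ⟨e, ⟨-, hl⟩, hhead, hlast⟩
    exact ⟨hl, by rwa [isTailed_iff_of_head?_eq hhead]⟩

lemma ncard_closedGeodesics_eq_prod_getLast {k : ℕ} (hk : k ≠ 0) (x : X.V) :
    (X.closedGeodesics k x).ncard = {q ∈ X.edgesAt x ×ˢ X.loops k x |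
      ¬ q.2.head? = some q.1 ∧ q.2.getLast? = some (X.bar q.1)}.ncard := by
  have hinj : InjOn Prod.snd {q ∈ X.edgesAt x ×ˢ X.loops k x |
      ¬ q.2.head? = some q.1 ∧ q.2.getLast? = some (X.bar q.1)} := by
    rintro ⟨e, l⟩ ⟨-, -, he⟩ ⟨e', l'⟩ ⟨-, -, he'⟩ (rfl : l = l')
    simpa using X.bar_injective (Option.some_injective _ (he.symm.trans he'))
  rw [← hinj.ncard_image]
  congr 1
  ext l
  simp only [closedGeodesics, edgesAt, mem_ofPred_eq, mem_image, mem_prod, Prod.exists,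
    exists_eq_right]
  constructor
  · rintro ⟨hl, htail⟩
    rcases l.eq_nil_or_concat' with rfl | ⟨s, f, rfl⟩
    · exact absurd hl.1.symm hk
    refine ⟨X.bar f, ⟨by simpa using (isGeodesicPath_append_singleton.1 hl.2).1, hl⟩, ?_,
      by simp [X.bar_bar]⟩
    rwa [← isTailed_iff_of_getLast?_eq (by simp)]
  · rintro ⟨e, ⟨-, hl⟩, hhead, hlast⟩
    exact ⟨hl, by rwa [isTailed_iff_of_getLast?_eq hlast, X.bar_bar]⟩

lemma ncard_tailedLoops_eq_prod {k : ℕ} (x : X.V) :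
    (X.tailedLoops k x).ncard = {q ∈ X.edgesAt x ×ˢ X.loops k x |
      q.2.head? = some q.1 ∧ q.2.getLast? = some (X.bar q.1)}.ncard := by
  have hinj : InjOn Prod.snd {q ∈ X.edgesAt x ×ˢ X.loops k x |
      q.2.head? = some q.1 ∧ q.2.getLast? = some (X.bar q.1)} := by
    rintro ⟨e, l⟩ ⟨-, he, -⟩ ⟨e', l'⟩ ⟨-, he', -⟩ (rfl : l = l')
    simp_all
  rw [← hinj.ncard_image]
  congr 1
  ext l
  simp only [tailedLoops, edgesAt, mem_ofPred_eq, mem_image, mem_prod, Prod.exists,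
    exists_eq_right]
  constructor
  · rintro ⟨hl, e, he, hlast⟩
    obtain ⟨l, rfl⟩ := List.head?_eq_some_iff.1 he
    exact ⟨e, ⟨(isGeodesicPath_cons.1 hl.2).1, hl⟩, rfl, hlast⟩
  · rintro ⟨e, ⟨-, hl⟩, hhead, hlast⟩
    exact ⟨hl, e, hhead, hlast⟩

lemma tailedLoops_eq_empty {m : ℕ} (hm : m ≤ 2) (x : X.V) : X.tailedLoops m x = ∅ :=
  eq_empty_of_forall_notMem fun _ hl => not_isTailed_of_length_le_two (hl.1.1 ▸ hm) hl.1.2 hl.2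

lemma doublyBacktrackingPairs_eq_empty {m : ℕ} (hm : m ≤ 2) (x : X.V) :
    X.doublyBacktrackingPairs m x = ∅ :=
  eq_empty_of_forall_notMem fun _ ⟨⟨_, hlen, hl⟩, hhead, hlast⟩ =>
    not_isTailed_of_length_le_two (hlen ▸ hm) hl <| by
      rwa [isTailed_iff_of_head?_eq hhead, X.bar_bar]

section Counting

variable (hfin : ∀ x : X.V, (X.edgesAt x).Finite)
include hfin

theorem finsum_c_t_eq {m : ℕ} (hm : m ≠ 0) (x : X.V) :
    ∑ᶠ e ∈ X.edgesAt x, X.c m (X.t e) = (X.tailedLoops (m + 2) x).ncard + 2 * X.N m x +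
      (X.doublyBacktrackingPairs m x).ncard := by
  rw [← ncard_edgeLoopPairs hfin, ncard_split_by_two_predicates
    (edgeLoopPairs_finite hfin m x) (fun q => q.2.head? = some (X.bar q.1))
    (fun q => q.2.getLast? = some q.1), ← ncard_tailedLoops_add_two_eq_edgeLoopPairs hm,
    ← ncard_closedGeodesics_eq_edgeLoopPairs_head hm,
    ← ncard_closedGeodesics_eq_edgeLoopPairs_getLast hm, N_eq_ncard_closedGeodesics,
    doublyBacktrackingPairs]
  ring

theorem deg_mul_c_eq {k : ℕ} (hk : k ≠ 0) (x : X.V) :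
    X.deg x * X.c k x = (X.doublyBacktrackingPairs (k + 2) x).ncard + 2 * X.N k x +
      (X.tailedLoops k x).ncard := by
  rw [deg, Nat.card_coe_set_eq, c_eq_ncard_loops, ← ncard_prod,
    ncard_split_by_two_predicates ((hfin x).prod (loops_finite hfin k x))
    (fun q => q.2.head? = some q.1) (fun q => q.2.getLast? = some (X.bar q.1)),
    ← ncard_doublyBacktrackingPairs_add_two_eq_prod hk, ← ncard_closedGeodesics_eq_prod_head hk,
    ← ncard_closedGeodesics_eq_prod_getLast hk, ← ncard_tailedLoops_eq_prod,
    N_eq_ncard_closedGeodesics]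
  ring

end Counting

end SerreGraph

/-- The sum of `g j` over the indices `0 < j < m` with `j ≡ m [MOD 2]`. -/
def paritySum (g : ℕ → ℤ) (m : ℕ) : ℤ :=
  ∑ j ∈ Finset.Icc 1 ((m + 1) / 2 - 1), g (m - 2 * j)

def weightedParitySum (g : ℕ → ℤ) (m : ℕ) : ℤ :=
  ∑ j ∈ Finset.Icc 1 ((m + 1) / 2 - 1), (j : ℤ) * g (m - 2 * j)

lemma paritySum_of_le_two (g : ℕ → ℤ) {m : ℕ} (hm : m ≤ 2) : paritySum g m = 0 := by
  simp [paritySum, show (m + 1) / 2 - 1 = 0 by omega]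

lemma weightedParitySum_of_le_two (g : ℕ → ℤ) {m : ℕ} (hm : m ≤ 2) :
    weightedParitySum g m = 0 := by
  simp [weightedParitySum, show (m + 1) / 2 - 1 = 0 by omega]

lemma paritySum_add_two (g : ℕ → ℤ) {m : ℕ} (hm : 1 ≤ m) :
    paritySum g (m + 2) = g m + paritySum g m := by
  rw [paritySum, paritySum, show (m + 2 + 1) / 2 - 1 = (m + 1) / 2 - 1 + 1 by omega,
    Finset.sum_Icc_one_add_one]
  congr 1
  exact Finset.sum_congr rfl fun j _ => by rw [show m + 2 - 2 * (j + 1) = m - 2 * j by omega]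

lemma weightedParitySum_add_two (g : ℕ → ℤ) {m : ℕ} (hm : 1 ≤ m) :
    weightedParitySum g (m + 2) = paritySum g (m + 2) + weightedParitySum g m := by
  rw [paritySum_add_two g hm, weightedParitySum, weightedParitySum, paritySum,
    show (m + 2 + 1) / 2 - 1 = (m + 1) / 2 - 1 + 1 by omega, Finset.sum_Icc_one_add_one]
  simp only [show ∀ j, m + 2 - 2 * (j + 1) = m - 2 * j by omega, mul_zero, Nat.sub_zero,
    Nat.cast_add, Nat.cast_one, add_mul, one_mul, Finset.sum_add_distrib]
  ring

lemma mul_paritySum (r : ℤ) (g : ℕ → ℤ) (m : ℕ) :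
    r * paritySum g m = paritySum (fun j => r * g j) m :=
  Finset.mul_sum _ _ _

theorem eq_paritySum_sub_weightedParitySum {t C a l : ℕ → ℤ}
    (hsmall : ∀ m ≤ 2, t m = 0 ∧ C m = 0) (hC : ∀ m, 1 ≤ m → C (m + 2) = a m + t m)
    (ht : ∀ m, 1 ≤ m → t (m + 2) = a m - l m + 2 * t m - C m) :
    ∀ m, 1 ≤ m → t m = paritySum a m - weightedParitySum l m := by
  intro m hm
  induction m using Nat.strong_induction_on with
  | _ m ih =>
  rcases Nat.lt_or_ge m 3 with hm2 | hm3
  · rw [(hsmall m (by omega)).1, paritySum_of_le_two a (by omega),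
      weightedParitySum_of_le_two l (by omega), sub_zero]
  obtain ⟨k, rfl⟩ := Nat.exists_eq_add_of_le' hm3
  have hdiff : t (k + 1) - C (k + 1) = - paritySum l (k + 1) := by
    rcases Nat.lt_or_ge k 2 with hk | hk
    · rw [(hsmall _ (by omega)).1, (hsmall _ (by omega)).2, paritySum_of_le_two l (by omega)]
      ring
    obtain ⟨j, rfl⟩ := Nat.exists_eq_add_of_le' hk
    rw [hC (j + 1) (by omega), ih (j + 3) (by omega) (by omega),
      ih (j + 1) (by omega) (by omega), paritySum_add_two a (by omega),
      weightedParitySum_add_two l (by omega)]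
    ring
  rw [ht (k + 1) (by omega), paritySum_add_two a (by omega), weightedParitySum_add_two l (by omega),
    paritySum_add_two l (by omega)]
  linear_combination hdiff + ih (k + 1) (by omega) (by omega)

namespace SerreGraph

variable {X : SerreGraph} (hfin : ∀ x : X.V, (X.edgesAt x).Finite)
include hfin

theorem ncard_tailedLoops_eq {m : ℕ} (hm : 1 ≤ m) (x : X.V) :
    ((X.tailedLoops m x).ncard : ℤ) =
      ((X.deg x : ℤ) - 2) * paritySum (fun j => (X.c j x : ℤ)) m -
        weightedParitySum (fun j => X.lap (fun y => (X.c j y : ℤ)) x) m := by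
  rw [mul_paritySum]
  refine eq_paritySum_sub_weightedParitySum (t := fun m => ((X.tailedLoops m x).ncard : ℤ))
    (C := fun m => (X.doublyBacktrackingPairs m x).ncard)
    (fun m hm => ?_) (fun m hm => ?_) (fun m hm => ?_) m hm
  · simp [tailedLoops_eq_empty hm, doublyBacktrackingPairs_eq_empty hm]
  · have hdeg := deg_mul_c_eq hfin (k := m) (by omega) x
    rw [c_eq_ncard_tailedLoops_add_N hfin m x] at hdeg ⊢
    zify at hdeg
    push_cast
    linear_combination -hdeg
  · have hsum := finsum_c_t_eq hfin (m := m) (by omega) x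
    have hc := c_eq_ncard_tailedLoops_add_N hfin m x
    have hlap : X.lap (fun y => (X.c m y : ℤ)) x =
        X.deg x * X.c m x - ((∑ᶠ e ∈ X.edgesAt x, X.c m (X.t e) : ℕ) : ℤ) := by
      rw [lap, Nat.cast_finsum_mem (hfin x)]
    rw [hlap, hsum, hc]
    push_cast
    ring

end SerreGraph

theorem N_eq_B_add_R_general (X : SerreGraph)
    (hfin : ∀ x : X.V, (X.edgesAt x).Finite)
    (x₀ : X.V)
    (b R : ℕ → ℤ)
    (hb_small : ∀ m : ℕ, m ≤ 2 → b m = (X.c m x₀ : ℤ))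
    (hb : ∀ m : ℕ, 3 ≤ m → b m = (X.c m x₀ : ℤ) -
      ((X.deg x₀ : ℤ) - 2) * ∑ j ∈ Finset.Icc 1 ((m + 1) / 2 - 1), (X.c (m - 2 * j) x₀ : ℤ))
    (hR : ∀ m : ℕ, R m = ∑ i ∈ Finset.Icc 1 ((m + 1) / 2 - 1),
      (i : ℤ) * X.lap (fun x => (X.c (m - 2 * i) x : ℤ)) x₀) :
    PowerSeries.mk (fun m : ℕ => if m = 0 then (0 : ℚ) else (X.N m x₀ : ℚ)) =
      PowerSeries.mk (fun m : ℕ => if m = 0 then (0 : ℚ) else (b m : ℚ)) +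
        PowerSeries.mk (fun m : ℕ => if m = 0 then (0 : ℚ) else (R m : ℚ)) := by
  have hcoeff : ∀ m, 1 ≤ m → (X.N m x₀ : ℤ) = b m + R m := by
    intro m hm
    have hbm : b m = X.c m x₀ -
        ((X.deg x₀ : ℤ) - 2) * paritySum (fun j => (X.c j x₀ : ℤ)) m := by
      rcases Nat.lt_or_ge m 3 with h | h
      · rw [hb_small m (by omega), paritySum_of_le_two _ (by omega), mul_zero, sub_zero]
      · exact hb m h
    have hRm : R m = weightedParitySum (fun j => X.lap (fun x => (X.c j x : ℤ)) x₀) m := hR m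
    have hc : (X.c m x₀ : ℤ) = (X.tailedLoops m x₀).ncard + X.N m x₀ := by
      exact_mod_cast X.c_eq_ncard_tailedLoops_add_N hfin m x₀
    rw [hbm, hRm]
    linear_combination -hc - SerreGraph.ncard_tailedLoops_eq hfin hm x₀
  ext n
  simp only [map_add, PowerSeries.coeff_mk]
  split_ifs with hn
  · simp
  · exact_mod_cast hcoeff n (Nat.one_le_iff_ne_zero.2 hn)

/-- With `b_m`, `R_m` as in the paper, in `ℚ[[u]]`:
`N(u:x₀) = B(u:x₀) + R(u:x₀)`. -/
theorem N_eq_B_add_R (X : SerreGraph) [Countable X.V]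
    (hconn : X.Connected)
    (hfin : ∀ x : X.V, (X.edgesAt x).Finite)
    (hbd : ∃ M : ℕ, ∀ x : X.V, X.deg x ≤ M)
    (hdeg1 : ∀ x : X.V, X.deg x ≠ 1)
    (x₀ : X.V)
    (b R : ℕ → ℤ)
    (hb_small : ∀ m : ℕ, m ≤ 2 → b m = (X.c m x₀ : ℤ))
    (hb : ∀ m : ℕ, 3 ≤ m → b m = (X.c m x₀ : ℤ) -
      ((X.deg x₀ : ℤ) - 2) * ∑ j ∈ Finset.Icc 1 ((m + 1) / 2 - 1), (X.c (m - 2 * j) x₀ : ℤ))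
    (hR : ∀ m : ℕ, R m = ∑ i ∈ Finset.Icc 1 ((m + 1) / 2 - 1),
      (i : ℤ) * X.lap (fun x => (X.c (m - 2 * i) x : ℤ)) x₀) :
    PowerSeries.mk (fun m : ℕ => if m = 0 then (0 : ℚ) else (X.N m x₀ : ℚ)) =
      PowerSeries.mk (fun m : ℕ => if m = 0 then (0 : ℚ) else (b m : ℚ)) +
        PowerSeries.mk (fun m : ℕ => if m = 0 then (0 : ℚ) else (R m : ℚ)) :=
  N_eq_B_add_R_general X hfin x₀ b R hb_small hb hR
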